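/- arXiv:2306.02205 — 4 statements merged into one kernel-verified Lean document; each statement's English description precedes it below -/
import Mathlib

section
/- Let a, b be positive integers with b ≥ a+1, let c > 0, α ∈ (0,1), and let k ≥ 2 be an integer. If a ≥ (2(k-1)α/(c(1-α)))^{1/(1-α)}, then ∫_a^b x^{-kα} exp(c x^{1-α}) dx ≤ (2/(c(1-α)))(b^{-(k-1)α} exp(c b^{1-α}) - a^{-(k-1)α} exp(c a^{1-α})). -/
open Real

theorem stmt1 (a b k : ℕ) (c α : ℝ) (ha : 0 < a) (hab : a + 1 ≤ b) (hk : 2 ≤ k)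
    (hc : 0 < c) (hα0 : 0 < α) (hα1 : α < 1)
    (hlarge : (2 * ((k : ℝ) - 1) * α / (c * (1 - α))) ^ ((1 : ℝ) / (1 - α)) ≤ (a : ℝ)) :
    ∫ x in (a : ℝ)..(b : ℝ), x ^ (-((k : ℝ) * α)) * Real.exp (c * x ^ (1 - α)) ≤
      (2 / (c * (1 - α))) *
        ((b : ℝ) ^ (-(((k : ℝ) - 1) * α)) * Real.exp (c * (b : ℝ) ^ (1 - α)) -
          (a : ℝ) ^ (-(((k : ℝ) - 1) * α)) * Real.exp (c * (a : ℝ) ^ (1 - α))) := by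
  have hq0 : 0 < 1 - α := by linarith
  set q : ℝ := 1 - α with hqdef
  set K : ℝ := (k : ℝ) - 1 with hKdef
  have hk2 : (2:ℝ) ≤ (k:ℝ) := by exact_mod_cast hk
  have hK1 : (1:ℝ) ≤ K := by simp only [hKdef]; linarith
  have hK0 : 0 < K := by linarith
  have hcq : 0 < c * q := mul_pos hc hq0
  have ha0 : (0:ℝ) < a := by exact_mod_cast ha
  have hab' : (a:ℝ) ≤ b := by exact_mod_cast Nat.le_of_succ_le hab
  set M : ℝ := 2 * K * α / (c * q) with hMdef
  have hM0 : 0 < M := by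
    apply div_pos _ hcq
    positivity
  -- F is the antiderivative, f its derivative
  set F : ℝ → ℝ := fun x => (1 / (c * q)) * (x ^ (-(K * α)) * Real.exp (c * x ^ q)) with hFdef
  set f : ℝ → ℝ := fun x =>
    x ^ (-((k:ℝ) * α)) * Real.exp (c * x ^ q) * (1 - (K * α / (c * q)) * x ^ (-q)) with hfdef
  set g : ℝ → ℝ := fun x => x ^ (-((k:ℝ) * α)) * Real.exp (c * x ^ q) with hgdef
  have hIcc : Set.uIcc (a:ℝ) (b:ℝ) = Set.Icc (a:ℝ) (b:ℝ) := Set.uIcc_of_le hab'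
  have hxpos : ∀ x ∈ Set.Icc (a:ℝ) (b:ℝ), 0 < x := fun x hx => lt_of_lt_of_le ha0 hx.1
  -- F has derivative f on [a,b]
  have hderiv : ∀ x ∈ Set.uIcc (a:ℝ) (b:ℝ), HasDerivAt F (f x) x := by
    intro x hx
    rw [hIcc] at hx
    have hx0 : 0 < x := hxpos x hx
    have hxne : x ≠ 0 := ne_of_gt hx0
    have h1 : HasDerivAt (fun y : ℝ => y ^ (-(K * α))) (-(K * α) * x ^ (-(K * α) - 1)) x :=
      Real.hasDerivAt_rpow_const (Or.inl hxne)
    have h2 : HasDerivAt (fun y : ℝ => y ^ q) (q * x ^ (q - 1)) x :=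
      Real.hasDerivAt_rpow_const (Or.inl hxne)
    have h3 : HasDerivAt (fun y : ℝ => Real.exp (c * y ^ q))
        (Real.exp (c * x ^ q) * (c * (q * x ^ (q - 1)))) x := (h2.const_mul c).exp
    have h4 := (h1.mul h3).const_mul (1 / (c * q))
    convert h4 using 1
    case e'_4 => rfl
    · rfl
    · rfl
    have e1 : x ^ (-(K * α) - 1) = x ^ (-((k:ℝ) * α)) * x ^ (-q) := by
      rw [← Real.rpow_add hx0]
      congr 1
      simp only [hqdef, hKdef]; ring
    have e2 : x ^ (-(K * α)) * x ^ (q - 1) = x ^ (-((k:ℝ) * α)) := by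
      rw [← Real.rpow_add hx0]
      congr 1
      simp only [hqdef, hKdef]; ring
    have e2' : x ^ (-(K * α)) * (Real.exp (c * x ^ q) * (c * (q * x ^ (q - 1)))) =
        x ^ (-((k:ℝ) * α)) * Real.exp (c * x ^ q) * (c * q) := by
      rw [show x ^ (-(K * α)) * (Real.exp (c * x ^ q) * (c * (q * x ^ (q - 1)))) =
        (x ^ (-(K * α)) * x ^ (q - 1)) * (Real.exp (c * x ^ q) * (c * q)) from by ring, e2]
      ring
    simp only [hfdef]
    rw [e1, e2']
    have hcqne : c * q ≠ 0 := ne_of_gt hcq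
    field_simp
    ring
  -- continuity / integrability
  have hcontf : ContinuousOn f (Set.uIcc (a:ℝ) (b:ℝ)) := by
    rw [hIcc]
    have hne : ∀ x ∈ Set.Icc (a:ℝ) (b:ℝ), x ≠ (0:ℝ) ∨ (0:ℝ) ≤ -((k:ℝ)*α) :=
      fun x hx => Or.inl (ne_of_gt (hxpos x hx))
    apply ContinuousOn.mul
    · apply ContinuousOn.mul
      · exact ContinuousOn.rpow_const continuousOn_id hne
      · exact Real.continuous_exp.comp_continuousOn
          (continuousOn_const.mul (ContinuousOn.rpow_const continuousOn_id
            fun x hx => Or.inl (ne_of_gt (hxpos x hx))))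
    · exact continuousOn_const.sub (continuousOn_const.mul
        (ContinuousOn.rpow_const continuousOn_id fun x hx => Or.inl (ne_of_gt (hxpos x hx))))
  have hcontg : ContinuousOn g (Set.uIcc (a:ℝ) (b:ℝ)) := by
    rw [hIcc]
    apply ContinuousOn.mul
    · exact ContinuousOn.rpow_const continuousOn_id fun x hx => Or.inl (ne_of_gt (hxpos x hx))
    · exact Real.continuous_exp.comp_continuousOn
        (continuousOn_const.mul (ContinuousOn.rpow_const continuousOn_id
          fun x hx => Or.inl (ne_of_gt (hxpos x hx))))
  have hintf : IntervalIntegrable f MeasureTheory.volume (a:ℝ) (b:ℝ) :=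
    hcontf.intervalIntegrable
  have hintg : IntervalIntegrable g MeasureTheory.volume (a:ℝ) (b:ℝ) :=
    hcontg.intervalIntegrable
  -- FTC
  have hFTC : ∫ x in (a:ℝ)..(b:ℝ), f x = F (b:ℝ) - F (a:ℝ) :=
    intervalIntegral.integral_eq_sub_of_hasDerivAt hderiv hintf
  -- pointwise bound g ≤ 2 f on [a,b]
  have hbound : ∀ x ∈ Set.Icc (a:ℝ) (b:ℝ), g x ≤ 2 * f x := by
    intro x hx
    have hx0 : 0 < x := hxpos x hx
    have hMa : M ^ ((1:ℝ)/q) ≤ (a:ℝ) := hlarge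
    have hMq : M ≤ x ^ q := by
      have h1 : M ^ ((1:ℝ)/q) ≤ x := le_trans hMa hx.1
      have h2 : (M ^ ((1:ℝ)/q)) ^ q ≤ x ^ q :=
        Real.rpow_le_rpow (Real.rpow_nonneg hM0.le _) h1 hq0.le
      rwa [← Real.rpow_mul hM0.le, one_div,
        inv_mul_cancel₀ (ne_of_gt hq0), Real.rpow_one] at h2

    have hxq0 : 0 < x ^ q := Real.rpow_pos_of_pos hx0 q
    have ht : (K * α / (c * q)) * x ^ (-q) ≤ 1 / 2 := by
      rw [Real.rpow_neg hx0.le]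
      have h1 : (x ^ q)⁻¹ ≤ M⁻¹ := by
        apply inv_anti₀ hM0 hMq
      have h2 : (K * α / (c * q)) * (x ^ q)⁻¹ ≤ (K * α / (c * q)) * M⁻¹ := by
        apply mul_le_mul_of_nonneg_left h1
        positivity
      have h3 : (K * α / (c * q)) * M⁻¹ = 1 / 2 := by
        rw [hMdef]
        field_simp
      linarith
    have hg0 : 0 ≤ g x := by
      simp only [hgdef]
      positivity
    simp only [hfdef, hgdef] at *
    nlinarith [hg0, ht]
  -- conclude
  have hmono : ∫ x in (a:ℝ)..(b:ℝ), g x ≤ ∫ x in (a:ℝ)..(b:ℝ), 2 * f x := by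
    apply intervalIntegral.integral_mono_on hab' hintg (hintf.const_mul 2) hbound
  have h2f : ∫ x in (a:ℝ)..(b:ℝ), 2 * f x = 2 * (F (b:ℝ) - F (a:ℝ)) := by
    rw [intervalIntegral.integral_const_mul, hFTC]
  have hRHS : (2 / (c * q)) *
        ((b : ℝ) ^ (-(K * α)) * Real.exp (c * (b : ℝ) ^ q) -
          (a : ℝ) ^ (-(K * α)) * Real.exp (c * (a : ℝ) ^ q)) = 2 * (F (b:ℝ) - F (a:ℝ)) := by
    simp only [hFdef]
    ring
  calc ∫ x in (a:ℝ)..(b:ℝ), x ^ (-((k : ℝ) * α)) * Real.exp (c * x ^ q)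
      = ∫ x in (a:ℝ)..(b:ℝ), g x := by simp only [hgdef]
    _ ≤ ∫ x in (a:ℝ)..(b:ℝ), 2 * f x := hmono
    _ = 2 * (F (b:ℝ) - F (a:ℝ)) := h2f
    _ = (2 / (c * q)) *
        ((b : ℝ) ^ (-(K * α)) * Real.exp (c * (b : ℝ) ^ q) -
          (a : ℝ) ^ (-(K * α)) * Real.exp (c * (a : ℝ) ^ q)) := hRHS.symm
end

section
/- For any vectors u, v in R^d and any real γ > 0 and λ > 0, ‖u - γ v‖⁴ ≤ (1 + λγ + γ³)‖u‖⁴ + (γ⁴ + 36γ³/λ + 3γ³)‖v‖⁴ - 4γ⟨u, v⟩‖u‖². -/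
theorem stmt11 {E : Type*} [NormedAddCommGroup E] [InnerProductSpace ℝ E]
    (u v : E) (γ l : ℝ) (hγ : 0 < γ) (hl : 0 < l) :
    ‖u - γ • v‖ ^ 4 ≤ (1 + l * γ + γ ^ 3) * ‖u‖ ^ 4
      + (γ ^ 4 + 36 * γ ^ 3 / l + 3 * γ ^ 3) * ‖v‖ ^ 4
      - 4 * γ * (inner ℝ u v : ℝ) * ‖u‖ ^ 2 := by
  set a := ‖u‖ with ha
  set b := ‖v‖ with hb
  set t : ℝ := inner ℝ u v with ht
  have hsq : ‖u - γ • v‖ ^ 2 = a ^ 2 - 2 * γ * t + γ ^ 2 * b ^ 2 := by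
    rw [@norm_sub_sq_real, real_inner_smul_right, norm_smul, Real.norm_eq_abs,
      abs_of_pos hγ]
    ring
  have h4 : ‖u - γ • v‖ ^ 4 = (a ^ 2 - 2 * γ * t + γ ^ 2 * b ^ 2) ^ 2 := by
    rw [show (4 : ℕ) = 2 * 2 from rfl, pow_mul, hsq]
  rw [h4]
  have hcs : t ^ 2 ≤ a ^ 2 * b ^ 2 := by
    nlinarith [abs_real_inner_le_norm u v, sq_abs t, abs_nonneg t,
      norm_nonneg u, norm_nonneg v]
  have habs : |t| ≤ a * b := abs_real_inner_le_norm u v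
  have htb : -(a * b) ≤ t := neg_le_of_abs_le habs
  have ha0 : 0 ≤ a := norm_nonneg u
  have hb0 : 0 ≤ b := norm_nonneg v
  have h1 : 6 * γ ^ 2 * a ^ 2 * b ^ 2 ≤ l * γ * a ^ 4 + 36 * γ ^ 3 / l * b ^ 4 := by
    have key : (0:ℝ) ≤ γ * (l * a ^ 2 - 3 * γ * b ^ 2) ^ 2 / l := by positivity
    have extra : (0:ℝ) ≤ 27 * γ ^ 3 / l * b ^ 4 := by positivity
    have he : γ * (l * a ^ 2 - 3 * γ * b ^ 2) ^ 2 / l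
        = l * γ * a ^ 4 + 9 * γ ^ 3 / l * b ^ 4 - 6 * γ ^ 2 * a ^ 2 * b ^ 2 := by
      field_simp
      ring
    have he2 : (36 : ℝ) * γ ^ 3 / l * b ^ 4
        = 9 * γ ^ 3 / l * b ^ 4 + 27 * γ ^ 3 / l * b ^ 4 := by ring
    linarith [key, he.ge, he.le]
  have h2 : 4 * γ ^ 3 * (a * b ^ 3) ≤ γ ^ 3 * a ^ 4 + 3 * γ ^ 3 * b ^ 4 := by
    have hab : 4 * (a * b ^ 3) ≤ a ^ 4 + 3 * b ^ 4 := by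
      nlinarith [sq_nonneg (a - b), sq_nonneg (a + b), sq_nonneg (a * b - b ^ 2),
        sq_nonneg (a ^ 2 - b ^ 2), mul_nonneg ha0 hb0,
        mul_nonneg (mul_nonneg ha0 hb0) hb0]
    nlinarith [mul_le_mul_of_nonneg_left hab (le_of_lt (pow_pos hγ 3))]
  have c1 : 4 * γ ^ 2 * t ^ 2 ≤ 4 * γ ^ 2 * (a ^ 2 * b ^ 2) := by
    have := mul_le_mul_of_nonneg_left hcs (by positivity : (0:ℝ) ≤ 4 * γ ^ 2)
    linarith
  have c2 : -(4 * γ ^ 3 * b ^ 2 * t) ≤ 4 * γ ^ 3 * (a * b ^ 3) := by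
    have := mul_le_mul_of_nonneg_left htb (by positivity : (0:ℝ) ≤ 4 * γ ^ 3 * b ^ 2)
    nlinarith [this]
  nlinarith [c1, c2, h1, h2]
end

section
/- Let {a_n}_{n≥1} be a sequence of nonnegative reals, let λ > 0, c ≥ 0, and suppose a_{n+1} ≤ (1 - λ γ_{n+1}) a_n + c γ_{n+1}² for all n ≥ N₀, where γ_n = C n^{-α} with C > 0, α ∈ (1/2, 1), and λ γ_n ≤ 1 for all n ≥ N₀. Then there exists a constant K (depending on C, α, λ, c, N₀, and a_{N₀}) such that a_N ≤ K N^{-α} for all N ≥ 2N₀. -/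
open Filter Real

theorem stmt12 (a : ℕ → ℝ) (l c C α : ℝ) (N₀ : ℕ)
    (hN₀ : 1 ≤ N₀) (ha : ∀ n, 0 ≤ a n) (hl : 0 < l) (hc : 0 ≤ c) (hC : 0 < C)
    (hα1 : 1 / 2 < α) (hα2 : α < 1)
    (hγ : ∀ n, N₀ ≤ n → l * (C * (n : ℝ) ^ (-α)) ≤ 1)
    (hrec : ∀ n, N₀ ≤ n →
      a (n + 1) ≤ (1 - l * (C * ((n : ℝ) + 1) ^ (-α))) * a n
        + c * (C * ((n : ℝ) + 1) ^ (-α)) ^ 2) :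
    ∃ K : ℝ, ∀ N, 2 * N₀ ≤ N → a N ≤ K * (N : ℝ) ^ (-α) := by
  have hα0 : 0 < α := by linarith
  -- choose m such that α * n^(α-1) ≤ l*C/2 for n ≥ m
  obtain ⟨m, hm⟩ : ∃ m : ℕ, ∀ n : ℕ, m ≤ n → α * (n : ℝ) ^ (α - 1) ≤ l * C / 2 := by
    have h0 : Tendsto (fun n : ℕ => α * (n : ℝ) ^ (α - 1)) atTop (nhds (α * 0)) := by
      have h1 : Tendsto (fun x : ℝ => x ^ (-(1 - α))) atTop (nhds 0) :=
        tendsto_rpow_neg_atTop (by linarith)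
      have h2 := (h1.comp tendsto_natCast_atTop_atTop).const_mul α
      simpa [neg_sub, Function.comp] using h2
    rw [mul_zero] at h0
    have := h0.eventually_lt_const (by positivity : (0:ℝ) < l * C / 2)
    obtain ⟨m, hm⟩ := eventually_atTop.mp this
    exact ⟨m, fun n hn => (hm n hn).le⟩
  set M : ℕ := max (max m N₀) 1 with hM
  have hM1 : 1 ≤ M := le_max_right _ _
  have hMN₀ : N₀ ≤ M := le_trans (le_max_right m N₀) (le_max_left _ _)
  have hMm : m ≤ M := le_trans (le_max_left m N₀) (le_max_left _ _)
  -- the constant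
  set K : ℝ := 2 * c * C / l + ∑ i ∈ Finset.range (M + 1), a i * (i : ℝ) ^ α with hK
  have hsum_nonneg : 0 ≤ ∑ i ∈ Finset.range (M + 1), a i * (i : ℝ) ^ α :=
    Finset.sum_nonneg fun i _ => mul_nonneg (ha i) (rpow_nonneg (Nat.cast_nonneg i) α)
  have hK0 : 0 ≤ K := by
    have h2cC : 0 ≤ 2 * c * C / l := by positivity
    rw [hK]; linarith
  have hKl : 2 * c * C ≤ l * K := by
    have h1 : l * K = 2 * c * C + l * (∑ i ∈ Finset.range (M + 1), a i * (i : ℝ) ^ α) := by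
      rw [hK, mul_add]
      field_simp
    nlinarith [mul_nonneg hl.le hsum_nonneg]
  -- K bounds initial segment
  have hinit : ∀ n : ℕ, 1 ≤ n → n ≤ M → a n ≤ K * (n : ℝ) ^ (-α) := by
    intro n h1 h2
    have hn0 : (0:ℝ) < (n : ℝ) := by exact_mod_cast h1
    have hterm : a n * (n : ℝ) ^ α ≤ K := by
      have hle : a n * (n : ℝ) ^ α ≤ ∑ i ∈ Finset.range (M + 1), a i * (i : ℝ) ^ α :=
        Finset.single_le_sum
          (f := fun i => a i * (i : ℝ) ^ α)
          (fun i _ => mul_nonneg (ha i) (rpow_nonneg (Nat.cast_nonneg i) α))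
          (Finset.mem_range.mpr (Nat.lt_succ_of_le h2))
      have h2cC : 0 ≤ 2 * c * C / l := by positivity
      rw [hK]; linarith
    have hpos : (0:ℝ) < (n : ℝ) ^ (-α) := rpow_pos_of_pos hn0 _
    have key : a n = (a n * (n:ℝ) ^ α) * (n:ℝ) ^ (-α) := by
      rw [mul_assoc, ← rpow_add hn0]
      simp
    rw [key]
    exact mul_le_mul_of_nonneg_right hterm hpos.le
  -- key decay inequality
  have hkey : ∀ n : ℕ, M ≤ n →
      (n:ℝ) ^ (-α) - ((n:ℝ) + 1) ^ (-α) ≤ l * C / 2 * ((n:ℝ) ^ (-α) * ((n:ℝ) + 1) ^ (-α)) := by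
    intro n hn
    have hn1 : (1:ℕ) ≤ n := le_trans hM1 hn
    have hx : (0:ℝ) < (n:ℝ) := by exact_mod_cast hn1
    have hy : (0:ℝ) < (n:ℝ) + 1 := by linarith
    -- (n+1)^α - n^α ≤ α n^(α-1) ≤ lC/2
    have hbern : ((n:ℝ) + 1) ^ α - (n:ℝ) ^ α ≤ α * (n:ℝ) ^ (α - 1) := by
      have hinvn : (0:ℝ) ≤ 1 / (n:ℝ) := by positivity
      have h2 : (1 + 1 / (n:ℝ)) ^ α ≤ 1 + α * (1 / (n:ℝ)) :=
        rpow_one_add_le_one_add_mul_self (by linarith) hα0.le hα2.le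
      have h5 : (n:ℝ) ^ α * (1 + α * (1 / (n:ℝ))) = (n:ℝ) ^ α + α * (n:ℝ) ^ (α - 1) := by
        rw [mul_add, mul_one, rpow_sub hx, rpow_one]
        ring
      have hchain : ((n:ℝ) + 1) ^ α ≤ (n:ℝ) ^ α + α * (n:ℝ) ^ (α - 1) := by
        calc ((n:ℝ) + 1) ^ α = ((n:ℝ) * (1 + 1 / (n:ℝ))) ^ α := by
              congr 1; field_simp
          _ = (n:ℝ) ^ α * (1 + 1 / (n:ℝ)) ^ α := mul_rpow hx.le (by linarith)
          _ ≤ (n:ℝ) ^ α * (1 + α * (1 / (n:ℝ))) :=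
              mul_le_mul_of_nonneg_left h2 (rpow_nonneg hx.le α)
          _ = (n:ℝ) ^ α + α * (n:ℝ) ^ (α - 1) := h5
      linarith
    have hsmall : α * (n:ℝ) ^ (α - 1) ≤ l * C / 2 := hm n (le_trans hMm hn)
    have hxp : (0:ℝ) < (n:ℝ) ^ α := rpow_pos_of_pos hx α
    have hyp : (0:ℝ) < ((n:ℝ) + 1) ^ α := rpow_pos_of_pos hy α
    rw [rpow_neg hx.le, rpow_neg hy.le]
    have heq : ((n:ℝ) ^ α)⁻¹ - (((n:ℝ)+1) ^ α)⁻¹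
        = (((n:ℝ)+1) ^ α - (n:ℝ) ^ α) * (((n:ℝ) ^ α)⁻¹ * ((((n:ℝ)+1) ^ α)⁻¹)) := by
      field_simp
    rw [heq]
    have hinv : (0:ℝ) ≤ ((n:ℝ) ^ α)⁻¹ * ((((n:ℝ)+1) ^ α)⁻¹) := by positivity
    exact mul_le_mul_of_nonneg_right (le_trans hbern hsmall) hinv
  -- induction from M
  have hind : ∀ k : ℕ, a (M + k) ≤ K * ((M + k : ℕ) : ℝ) ^ (-α) := by
    intro k
    induction k with
    | zero => exact hinit M hM1 le_rfl
    | succ k ih =>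
      set n : ℕ := M + k with hn
      have hnM : M ≤ n := Nat.le_add_right _ _
      have hnN₀ : N₀ ≤ n := le_trans hMN₀ hnM
      have hn1 : (1:ℕ) ≤ n := le_trans hM1 hnM
      have hx : (0:ℝ) < (n:ℝ) := by exact_mod_cast hn1
      have hy : (0:ℝ) < (n:ℝ) + 1 := by linarith
      have hxp : (0:ℝ) < (n:ℝ) ^ (-α) := rpow_pos_of_pos hx _
      have hyp : (0:ℝ) < ((n:ℝ) + 1) ^ (-α) := rpow_pos_of_pos hy _
      have hyx : ((n:ℝ) + 1) ^ (-α) ≤ (n:ℝ) ^ (-α) :=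
        rpow_le_rpow_of_nonpos hx (by linarith) (by linarith)
      have hγ' : l * (C * ((n:ℝ) + 1) ^ (-α)) ≤ 1 := by
        have := hγ (n + 1) (le_trans hnN₀ (Nat.le_succ n))
        push_cast at this
        exact this
      have hrec' := hrec n hnN₀
      have hkey' := hkey n hnM
      have hposfac : 0 ≤ 1 - l * (C * ((n:ℝ) + 1) ^ (-α)) := by linarith
      have step1 : (1 - l * (C * ((n:ℝ) + 1) ^ (-α))) * a n
          ≤ (1 - l * (C * ((n:ℝ) + 1) ^ (-α))) * (K * (n:ℝ) ^ (-α)) :=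
        mul_le_mul_of_nonneg_left ih hposfac
      have goal' : (1 - l * (C * ((n:ℝ) + 1) ^ (-α))) * (K * (n:ℝ) ^ (-α))
          + c * (C * ((n:ℝ) + 1) ^ (-α)) ^ 2 ≤ K * ((n:ℝ) + 1) ^ (-α) := by
        set x := (n:ℝ) ^ (-α)
        set y := ((n:ℝ) + 1) ^ (-α)
        have h1 : K * (x - y) ≤ K * (l * C / 2 * (x * y)) :=
          mul_le_mul_of_nonneg_left hkey' hK0
        have h2 : y * y ≤ x * y := mul_le_mul_of_nonneg_right hyx hyp.le
        have h3 : (2 * c * C) * (C * (x * y)) ≤ (l * K) * (C * (x * y)) :=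
          mul_le_mul_of_nonneg_right hKl (by positivity)
        have h2' : c * C ^ 2 * (y * y) ≤ c * C ^ 2 * (x * y) :=
          mul_le_mul_of_nonneg_left h2 (by positivity)
        nlinarith [h1, h2', h3]
      have : a (n + 1) ≤ K * ((n:ℝ) + 1) ^ (-α) :=
        le_trans hrec' (le_trans (add_le_add_left step1 _) goal')
      have hcast : ((M + (k+1) : ℕ) : ℝ) = (n:ℝ) + 1 := by push_cast [hn]; ring
      rw [show M + (k+1) = n + 1 from by omega, show ((n+1:ℕ):ℝ) = (n:ℝ)+1 from by push_cast; ring]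
      exact this
  refine ⟨K, fun N hN => ?_⟩
  rcases le_or_gt M N with h | h
  · obtain ⟨k, rfl⟩ := Nat.exists_eq_add_of_le h
    exact hind k
  · exact hinit N (by omega) h.le
end

section
/- Let (Ω, F, P) be a probability space, {F_n}_{n≥0} a filtration, and F_∞ = σ(∪_n F_n). Suppose for each n, z_n, β_n, ξ_n, ζ_n are nonnegative F_n-measurable random variables satisfying E[z_{n+1} | F_n] ≤ z_n(1 + β_n) + ξ_n - ζ_n. Then on the event {∑_n β_n < ∞ and ∑_n ξ_n < ∞}, almost surely lim_n z_n exists and is finite, and ∑_n ζ_n < ∞. -/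
open MeasureTheory Filter
lemma one_le_prod_real {ι : Type*} {s : Finset ι} {f : ι → ℝ} (h : ∀ i ∈ s, 1 ≤ f i) :
    1 ≤ ∏ i ∈ s, f i :=
  calc (1:ℝ) = ∏ _i ∈ s, 1 := by simp
    _ ≤ ∏ i ∈ s, f i := Finset.prod_le_prod (by simp) h

noncomputable def rsP (b : ℕ → ℝ) (n : ℕ) : ℝ := ∏ k ∈ Finset.range n, (1 + b k)
noncomputable def rsQ (b x : ℕ → ℝ) (n : ℕ) : ℝ := ∏ k ∈ Finset.range n, (1 + x k / rsP b (k + 1))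
noncomputable def rsS (b c : ℕ → ℝ) (n : ℕ) : ℝ := ∑ k ∈ Finset.range n, c k / rsP b (k + 1)
noncomputable def rsW (zz b x c : ℕ → ℝ) (n : ℕ) : ℝ :=
  (zz n / rsP b n + rsS b c n + 1) / rsQ b x n

lemma rsP_succ (b : ℕ → ℝ) (n : ℕ) : rsP b (n + 1) = rsP b n * (1 + b n) :=
  Finset.prod_range_succ _ _

lemma rsQ_succ (b x : ℕ → ℝ) (n : ℕ) :
    rsQ b x (n + 1) = rsQ b x n * (1 + x n / rsP b (n + 1)) :=
  Finset.prod_range_succ _ _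

lemma rsS_succ (b c : ℕ → ℝ) (n : ℕ) :
    rsS b c (n + 1) = rsS b c n + c n / rsP b (n + 1) :=
  Finset.sum_range_succ _ _

lemma rsP_one_le (b : ℕ → ℝ) (hb : ∀ n, 0 ≤ b n) (n : ℕ) : 1 ≤ rsP b n := by
  rw [rsP]; refine one_le_prod_real ?_; intro k _; linarith [hb k]

lemma rsP_pos (b : ℕ → ℝ) (hb : ∀ n, 0 ≤ b n) (n : ℕ) : 0 < rsP b n :=
  lt_of_lt_of_le one_pos (rsP_one_le b hb n)

lemma rsP_mono (b : ℕ → ℝ) (hb : ∀ n, 0 ≤ b n) : Monotone (rsP b) := by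
  apply monotone_nat_of_le_succ
  intro n
  rw [rsP_succ]
  nlinarith [rsP_one_le b hb n, hb n]

lemma rsP_le_exp (b : ℕ → ℝ) (hb : ∀ n, 0 ≤ b n) (hbs : Summable b) (n : ℕ) :
    rsP b n ≤ Real.exp (∑' k, b k) := by
  rw [rsP]
  calc ∏ k ∈ Finset.range n, (1 + b k) ≤ ∏ k ∈ Finset.range n, Real.exp (b k) := by
        apply Finset.prod_le_prod
        · intro k _; linarith [hb k]
        · intro k _; linarith [Real.add_one_le_exp (b k)]
    _ = Real.exp (∑ k ∈ Finset.range n, b k) := by rw [Real.exp_sum]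
    _ ≤ Real.exp (∑' k, b k) :=
        Real.exp_le_exp.2 (Summable.sum_le_tsum _ (fun k _ => hb k) hbs)

lemma rs_pathwise (zz b x c : ℕ → ℝ) (hz : ∀ n, 0 ≤ zz n) (hb : ∀ n, 0 ≤ b n)
    (hx : ∀ n, 0 ≤ x n) (hc : ∀ n, 0 ≤ c n) (hbs : Summable b) (hxs : Summable x)
    (L : ℝ) (hW : Tendsto (fun n => rsW zz b x c n) atTop (nhds L)) :
    (∃ l, Tendsto zz atTop (nhds l)) ∧ Summable c := by
  have hP1 := rsP_one_le b hb
  have hPpos := rsP_pos b hb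
  -- P converges
  have hPbdd : BddAbove (Set.range (rsP b)) :=
    ⟨Real.exp (∑' k, b k), by rintro _ ⟨n, rfl⟩; exact rsP_le_exp b hb hbs n⟩
  have hPlim : Tendsto (rsP b) atTop (nhds (⨆ n, rsP b n)) :=
    tendsto_atTop_ciSup (rsP_mono b hb) hPbdd
  set pL := ⨆ n, rsP b n with hpL
  have hPle : ∀ n, rsP b n ≤ pL := fun n => le_ciSup hPbdd n
  -- e summable
  have he0 : ∀ k, 0 ≤ x k / rsP b (k + 1) := fun k => div_nonneg (hx k) (hPpos _).le
  have hes : Summable (fun k => x k / rsP b (k + 1)) :=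
    Summable.of_nonneg_of_le he0 (fun k => div_le_self (hx k) (hP1 _)) hxs
  -- Q facts
  have hQ1 : ∀ n, 1 ≤ rsQ b x n := fun n => by
    rw [rsQ]; refine one_le_prod_real ?_; intro k _; linarith [he0 k]
  have hQpos : ∀ n, 0 < rsQ b x n := fun n => lt_of_lt_of_le one_pos (hQ1 n)
  have hQmono : Monotone (rsQ b x) := by
    apply monotone_nat_of_le_succ
    intro n
    rw [rsQ_succ]
    nlinarith [he0 n, hQ1 n]
  have hQbdd : BddAbove (Set.range (rsQ b x)) := by
    refine ⟨Real.exp (∑' k, x k / rsP b (k + 1)), ?_⟩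
    rintro _ ⟨n, rfl⟩
    rw [rsQ]
    calc ∏ k ∈ Finset.range n, (1 + x k / rsP b (k+1))
        ≤ ∏ k ∈ Finset.range n, Real.exp (x k / rsP b (k + 1)) := by
          apply Finset.prod_le_prod
          · intro k _; linarith [he0 k]
          · intro k _; linarith [Real.add_one_le_exp (x k / rsP b (k+1))]
      _ = Real.exp (∑ k ∈ Finset.range n, x k / rsP b (k + 1)) := by rw [Real.exp_sum]
      _ ≤ _ := Real.exp_le_exp.2 (Summable.sum_le_tsum _ (fun k _ => he0 k) hes)
  have hQlim : Tendsto (rsQ b x) atTop (nhds (⨆ n, rsQ b x n)) :=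
    tendsto_atTop_ciSup hQmono hQbdd
  set qL := ⨆ n, rsQ b x n with hqL
  -- X = W * Q converges
  have hXeq : ∀ n, zz n / rsP b n + rsS b c n + 1 = rsW zz b x c n * rsQ b x n := fun n =>
    (div_mul_cancel₀ _ (hQpos n).ne').symm
  have hX : Tendsto (fun n => zz n / rsP b n + rsS b c n + 1) atTop (nhds (L * qL)) := by
    simp only [hXeq]; exact hW.mul hQlim
  have hXbdd : BddAbove (Set.range (fun n => zz n / rsP b n + rsS b c n + 1)) :=
    hX.bddAbove_range
  obtain ⟨B, hB⟩ := hXbdd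
  have hXB : ∀ n, zz n / rsP b n + rsS b c n + 1 ≤ B := fun n => hB ⟨n, rfl⟩
  -- S summable/convergent
  have hcs' : Summable (fun k => c k / rsP b (k + 1)) := by
    apply summable_of_sum_range_le (fun k => div_nonneg (hc k) (hPpos _).le) (c := B)
    intro n
    have := hXB n
    have h1 : 0 ≤ zz n / rsP b n := div_nonneg (hz n) (hPpos n).le
    simp only [rsS] at this ⊢
    linarith
  have hSlim : Tendsto (rsS b c) atTop (nhds (∑' k, c k / rsP b (k + 1))) :=
    hcs'.hasSum.tendsto_sum_nat
  -- Summable c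
  have hcs : Summable c := by
    apply Summable.of_nonneg_of_le hc (f := fun k => c k / rsP b (k + 1) * pL)
    · intro k
      calc c k = c k / rsP b (k + 1) * rsP b (k + 1) := (div_mul_cancel₀ _ (hPpos _).ne').symm
        _ ≤ c k / rsP b (k + 1) * pL :=
          mul_le_mul_of_nonneg_left (hPle _) (div_nonneg (hc k) (hPpos _).le)
    · exact hcs'.mul_right pL
  refine ⟨?_, hcs⟩
  -- z converges
  have hY : Tendsto (fun n => zz n / rsP b n) atTop
      (nhds (L * qL - (∑' k, c k / rsP b (k + 1)) - 1)) := by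
    have := (hX.sub hSlim).sub (tendsto_const_nhds (x := (1:ℝ)) (f := atTop (α := ℕ)))
    convert this using 2 with n
    ring
  refine ⟨(L * qL - (∑' k, c k / rsP b (k + 1)) - 1) * pL, ?_⟩
  have := hY.mul hPlim
  convert this using 2 with n
  exact (div_mul_cancel₀ _ (hPpos n).ne').symm

section rslemmas
variable (zz b x c : ℕ → ℝ)

lemma rsQ_one_le (hb : ∀ n, 0 ≤ b n) (hx : ∀ n, 0 ≤ x n) (n : ℕ) : 1 ≤ rsQ b x n := by
  rw [rsQ]; refine one_le_prod_real ?_; intro k _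
  have := div_nonneg (hx k) (rsP_pos b hb (k+1)).le
  linarith

lemma rsQ_pos (hb : ∀ n, 0 ≤ b n) (hx : ∀ n, 0 ≤ x n) (n : ℕ) : 0 < rsQ b x n :=
  lt_of_lt_of_le one_pos (rsQ_one_le b x hb hx n)

lemma rsS_nonneg (hb : ∀ n, 0 ≤ b n) (hc : ∀ n, 0 ≤ c n) (n : ℕ) : 0 ≤ rsS b c n := by
  rw [rsS]
  exact Finset.sum_nonneg fun k _ => div_nonneg (hc k) (rsP_pos b hb (k+1)).le

lemma rsS_le_sum (hb : ∀ n, 0 ≤ b n) (hc : ∀ n, 0 ≤ c n) (n : ℕ) :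
    rsS b c n ≤ ∑ k ∈ Finset.range n, c k := by
  rw [rsS]
  exact Finset.sum_le_sum fun k _ => div_le_self (hc k) (rsP_one_le b hb (k+1))

lemma rsW_nonneg (hz : ∀ n, 0 ≤ zz n) (hb : ∀ n, 0 ≤ b n) (hx : ∀ n, 0 ≤ x n)
    (hc : ∀ n, 0 ≤ c n) (n : ℕ) : 0 ≤ rsW zz b x c n := by
  rw [rsW]
  have h1 : 0 ≤ zz n / rsP b n := div_nonneg (hz n) (rsP_pos b hb n).le
  have h2 := rsS_nonneg b c hb hc n
  exact div_nonneg (by linarith) (rsQ_pos b x hb hx n).le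

lemma rsW_le (hz : ∀ n, 0 ≤ zz n) (hb : ∀ n, 0 ≤ b n) (hx : ∀ n, 0 ≤ x n)
    (hc : ∀ n, 0 ≤ c n) (n : ℕ) :
    rsW zz b x c n ≤ zz n + (∑ k ∈ Finset.range n, c k) + 1 := by
  rw [rsW]
  have h1 : zz n / rsP b n ≤ zz n := div_le_self (hz n) (rsP_one_le b hb n)
  have h2 := rsS_le_sum b c hb hc n
  have h0 : 0 ≤ zz n / rsP b n := div_nonneg (hz n) (rsP_pos b hb n).le
  have h3 := rsS_nonneg b c hb hc n
  calc (zz n / rsP b n + rsS b c n + 1) / rsQ b x n ≤ zz n / rsP b n + rsS b c n + 1 :=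
        div_le_self (by linarith) (rsQ_one_le b x hb hx n)
    _ ≤ _ := by linarith

lemma rsW_eq (hb : ∀ n, 0 ≤ b n) (hx : ∀ n, 0 ≤ x n) (n : ℕ) : rsW zz b x c (n + 1) =
    (1 / (rsP b (n + 1) * rsQ b x (n + 1))) * zz (n + 1)
      + (rsS b c (n + 1) + 1) / rsQ b x (n + 1) := by
  have hP := (rsP_pos b hb (n + 1)).ne'
  have hQ := (rsQ_pos b x hb hx (n + 1)).ne'
  rw [rsW]
  field_simp
  ring

lemma rs_key (hz : ∀ n, 0 ≤ zz n) (hb : ∀ n, 0 ≤ b n) (hx : ∀ n, 0 ≤ x n)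
    (hc : ∀ n, 0 ≤ c n) (n : ℕ) (r : ℝ)
    (hr : r ≤ zz n * (1 + b n) + x n - c n) :
    (1 / (rsP b (n + 1) * rsQ b x (n + 1))) * r
      + (rsS b c (n + 1) + 1) / rsQ b x (n + 1) ≤ rsW zz b x c n := by
  have hppos := rsP_pos b hb n
  have hp1 := rsP_one_le b hb n
  have hqpos := rsQ_pos b x hb hx n
  have hq1 := rsQ_one_le b x hb hx n
  have hP1pos := rsP_pos b hb (n + 1)
  have hQ1pos := rsQ_pos b x hb hx (n + 1)
  have hs0 := rsS_nonneg b c hb hc n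
  set E := x n / rsP b (n + 1) with hE
  have hE0 : 0 ≤ E := div_nonneg (hx n) hP1pos.le
  have hxE : x n = E * rsP b (n + 1) := (div_mul_cancel₀ _ hP1pos.ne').symm
  have step1 : (1 / (rsP b (n + 1) * rsQ b x (n + 1))) * r
        + (rsS b c (n + 1) + 1) / rsQ b x (n + 1)
      ≤ (1 / (rsP b (n + 1) * rsQ b x (n + 1))) * (zz n * (1 + b n) + x n - c n)
        + (rsS b c (n + 1) + 1) / rsQ b x (n + 1) := by
    have hpos : (0:ℝ) ≤ 1 / (rsP b (n + 1) * rsQ b x (n + 1)) := by positivity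
    exact add_le_add_left (mul_le_mul_of_nonneg_left hr hpos) _
  refine step1.trans ?_
  have step2 : (1 / (rsP b (n + 1) * rsQ b x (n + 1))) * (zz n * (1 + b n) + x n - c n)
        + (rsS b c (n + 1) + 1) / rsQ b x (n + 1)
      = (zz n / rsP b n + E + rsS b c n + 1) / (rsQ b x n * (1 + E)) := by
    rw [rsS_succ, rsQ_succ, ← hE, hxE, rsP_succ]
    have h1 : (1 : ℝ) + b n ≠ 0 := by linarith [hb n]
    have h2 : (1 : ℝ) + E ≠ 0 := by linarith
    field_simp
    ring
  rw [step2, rsW]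
  rw [div_le_div_iff₀ (by positivity) hqpos]
  have ha : 0 ≤ zz n / rsP b n := div_nonneg (hz n) hppos.le
  nlinarith [mul_nonneg (mul_nonneg hE0 hqpos.le) (add_nonneg ha hs0)]

end rslemmas

/-- The Robbins–Siegmund almost-supermartingale convergence theorem. -/
theorem stmt19 {Ω : Type*} {m0 : MeasurableSpace Ω} (μ : Measure Ω) [IsProbabilityMeasure μ]
    (ℱ : Filtration ℕ m0) (z β ξ ζ : ℕ → Ω → ℝ)
    (hmeas : ∀ n, StronglyMeasurable[ℱ n] (z n) ∧ StronglyMeasurable[ℱ n] (β n) ∧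
      StronglyMeasurable[ℱ n] (ξ n) ∧ StronglyMeasurable[ℱ n] (ζ n))
    (hnonneg : ∀ n ω, 0 ≤ z n ω ∧ 0 ≤ β n ω ∧ 0 ≤ ξ n ω ∧ 0 ≤ ζ n ω)
    (hzint : ∀ n, Integrable (z n) μ) (hβint : ∀ n, Integrable (β n) μ)
    (hξint : ∀ n, Integrable (ξ n) μ) (hζint : ∀ n, Integrable (ζ n) μ)
    (hprod : ∀ n, Integrable (fun ω => z n ω * (1 + β n ω)) μ)
    (hrec : ∀ n, μ[z (n + 1) | ℱ n] ≤ᵐ[μ]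
      fun ω => z n ω * (1 + β n ω) + ξ n ω - ζ n ω) :
    ∀ᵐ ω ∂μ, (Summable (fun n => β n ω) ∧ Summable (fun n => ξ n ω)) →
      (∃ l : ℝ, Tendsto (fun n => z n ω) atTop (nhds l)) ∧ Summable (fun n => ζ n ω) := by
  classical
  have hβ0 : ∀ n ω, 0 ≤ β n ω := fun n ω => (hnonneg n ω).2.1
  have hξ0 : ∀ n ω, 0 ≤ ξ n ω := fun n ω => (hnonneg n ω).2.2.1
  have hζ0 : ∀ n ω, 0 ≤ ζ n ω := fun n ω => (hnonneg n ω).2.2.2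
  have hz0 : ∀ n ω, 0 ≤ z n ω := fun n ω => (hnonneg n ω).1
  set W : ℕ → Ω → ℝ := fun n ω =>
    rsW (fun k => z k ω) (fun k => β k ω) (fun k => ξ k ω) (fun k => ζ k ω) n with hWdef
  have hW0 : ∀ n ω, 0 ≤ W n ω := fun n ω =>
    rsW_nonneg _ _ _ _ (fun k => hz0 k ω) (fun k => hβ0 k ω) (fun k => hξ0 k ω)
      (fun k => hζ0 k ω) n
  have hWle : ∀ n ω, W n ω ≤ z n ω + (∑ k ∈ Finset.range n, ζ k ω) + 1 := fun n ω =>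
    rsW_le _ _ _ _ (fun k => hz0 k ω) (fun k => hβ0 k ω) (fun k => hξ0 k ω)
      (fun k => hζ0 k ω) n
  -- measurability
  have hβm : ∀ n k, k ≤ n → Measurable[ℱ n] (β k) := fun n k h =>
    ((hmeas k).2.1.mono (ℱ.mono h)).measurable
  have hξm : ∀ n k, k ≤ n → Measurable[ℱ n] (ξ k) := fun n k h =>
    ((hmeas k).2.2.1.mono (ℱ.mono h)).measurable
  have hζm : ∀ n k, k ≤ n → Measurable[ℱ n] (ζ k) := fun n k h =>
    ((hmeas k).2.2.2.mono (ℱ.mono h)).measurable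
  have hPm : ∀ n k, k ≤ n + 1 → Measurable[ℱ n] (fun ω => rsP (fun j => β j ω) k) := by
    intro n k hk
    simp only [rsP]
    apply Finset.measurable_prod
    intro j hj
    exact measurable_const.add (hβm n j (by
      have := Finset.mem_range.1 hj; omega))
  have hQm : ∀ n k, k ≤ n + 1 → Measurable[ℱ n]
      (fun ω => rsQ (fun j => β j ω) (fun j => ξ j ω) k) := by
    intro n k hk
    simp only [rsQ]
    apply Finset.measurable_prod
    intro j hj
    have hj' : j < k := Finset.mem_range.1 hj
    exact measurable_const.add ((hξm n j (by omega)).div (hPm n (j + 1) (by omega)))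
  have hSm : ∀ n k, k ≤ n + 1 → Measurable[ℱ n]
      (fun ω => rsS (fun j => β j ω) (fun j => ζ j ω) k) := by
    intro n k hk
    simp only [rsS]
    apply Finset.measurable_sum
    intro j hj
    have hj' : j < k := Finset.mem_range.1 hj
    exact (hζm n j (by omega)).div (hPm n (j + 1) (by omega))
  have hWm : ∀ n, Measurable[ℱ n] (W n) := by
    intro n
    rw [hWdef]
    simp only [rsW]
    exact ((((hmeas n).1.measurable.div (hPm n n (by omega))).add
      (hSm n n (by omega))).add measurable_const).div (hQm n n (by omega))
  -- integrability
  have hWint : ∀ n, Integrable (W n) μ := by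
    intro n
    have hdom : Integrable (fun ω => z n ω + (∑ k ∈ Finset.range n, ζ k ω) + 1) μ :=
      ((hzint n).add (integrable_finset_sum _ fun k _ => hζint k)).add (integrable_const 1)
    refine hdom.mono (((hWm n).mono (ℱ.le n) le_rfl).stronglyMeasurable.aestronglyMeasurable) ?_
    refine Filter.Eventually.of_forall fun ω => ?_
    have h1 := hW0 n ω
    have h2 := hWle n ω
    have h3 : 0 ≤ z n ω + (∑ k ∈ Finset.range n, ζ k ω) + 1 := by
      have := hz0 n ω
      have : 0 ≤ ∑ k ∈ Finset.range n, ζ k ω :=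
        Finset.sum_nonneg fun k _ => hζ0 k ω
      positivity
    rw [Real.norm_of_nonneg h1, Real.norm_of_nonneg h3]
    exact h2
  -- the supermartingale property
  have hstep : ∀ n, μ[W (n + 1)|ℱ n] ≤ᵐ[μ] W n := by
    intro n
    set cf : Ω → ℝ := fun ω =>
      1 / (rsP (fun j => β j ω) (n + 1) * rsQ (fun j => β j ω) (fun j => ξ j ω) (n + 1))
      with hcf
    set df : Ω → ℝ := fun ω =>
      (rsS (fun j => β j ω) (fun j => ζ j ω) (n + 1) + 1)
        / rsQ (fun j => β j ω) (fun j => ξ j ω) (n + 1) with hdf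
    have hWsplit : W (n + 1) = (fun ω => cf ω * z (n + 1) ω) + df := by
      funext ω
      exact rsW_eq _ _ _ _ (fun k => hβ0 k ω) (fun k => hξ0 k ω) n
    have hcm : Measurable[ℱ n] cf :=
      measurable_const.div ((hPm n (n + 1) le_rfl).mul (hQm n (n + 1) le_rfl))
    have hdm : Measurable[ℱ n] df :=
      ((hSm n (n + 1) le_rfl).add measurable_const).div (hQm n (n + 1) le_rfl)
    have hc01 : ∀ ω, 0 ≤ cf ω ∧ cf ω ≤ 1 := by
      intro ω
      have hP1 := rsP_one_le (fun j => β j ω) (fun k => hβ0 k ω) (n + 1)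
      have hQ1 := rsQ_one_le (fun j => β j ω) (fun j => ξ j ω) (fun k => hβ0 k ω)
        (fun k => hξ0 k ω) (n + 1)
      constructor
      · positivity
      · rw [hcf]
        rw [div_le_one (by positivity)]
        nlinarith
    have hczint : Integrable (fun ω => cf ω * z (n + 1) ω) μ := by
      refine (hzint (n + 1)).mono
        (((hcm.mono (ℱ.le n) le_rfl).mul
          ((hmeas (n+1)).1.measurable.mono (ℱ.le (n+1)) le_rfl)).stronglyMeasurable.aestronglyMeasurable) ?_
      refine Filter.Eventually.of_forall fun ω => ?_
      have h1 := (hc01 ω).1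
      have h2 := (hc01 ω).2
      have h3 := hz0 (n + 1) ω
      rw [Real.norm_of_nonneg (by positivity), Real.norm_of_nonneg h3]
      nlinarith
    have hdint : Integrable df μ := by
      have hdom : Integrable (fun ω => (∑ k ∈ Finset.range (n + 1), ζ k ω) + 1) μ :=
        (integrable_finset_sum _ fun k _ => hζint k).add (integrable_const 1)
      refine hdom.mono ((hdm.mono (ℱ.le n) le_rfl).stronglyMeasurable.aestronglyMeasurable) ?_
      refine Filter.Eventually.of_forall fun ω => ?_
      have hS0' := rsS_nonneg (fun j => β j ω) (fun j => ζ j ω) (fun k => hβ0 k ω)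
        (fun k => hζ0 k ω) (n + 1)
      have hSle' := rsS_le_sum (fun j => β j ω) (fun j => ζ j ω) (fun k => hβ0 k ω)
        (fun k => hζ0 k ω) (n + 1)
      have hQ1 := rsQ_one_le (fun j => β j ω) (fun j => ξ j ω) (fun k => hβ0 k ω)
        (fun k => hξ0 k ω) (n + 1)
      have hd1 : df ω ≤ rsS (fun j => β j ω) (fun j => ζ j ω) (n + 1) + 1 :=
        div_le_self (by linarith) hQ1
      have hd0 : 0 ≤ df ω := by
        rw [hdf]
        exact div_nonneg (by linarith) (by linarith)
      have hsum0 : 0 ≤ ∑ k ∈ Finset.range (n + 1), ζ k ω :=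
        Finset.sum_nonneg fun k _ => hζ0 k ω
      rw [Real.norm_of_nonneg hd0, Real.norm_of_nonneg (by linarith)]
      linarith
    have hadd : μ[W (n + 1)|ℱ n] =ᵐ[μ]
        μ[fun ω => cf ω * z (n + 1) ω|ℱ n] + μ[df|ℱ n] := by
      rw [hWsplit]
      exact condExp_add hczint hdint _
    have hmul : μ[fun ω => cf ω * z (n + 1) ω|ℱ n] =ᵐ[μ] cf * μ[z (n + 1)|ℱ n] := by
      have := condExp_mul_of_stronglyMeasurable_left (μ := μ) hcm.stronglyMeasurable
        (f := cf) (g := z (n + 1)) hczint (hzint (n + 1))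
      exact this
    have hdeq : μ[df|ℱ n] = df :=
      condExp_of_stronglyMeasurable (ℱ.le n) hdm.stronglyMeasurable hdint
    filter_upwards [hadd, hmul, hrec n] with ω h1 h2 h3
    rw [h1]
    simp only [Pi.add_apply, hdeq]
    rw [h2]
    simp only [Pi.mul_apply]
    exact rs_key _ _ _ _ (fun k => hz0 k ω) (fun k => hβ0 k ω) (fun k => hξ0 k ω)
      (fun k => hζ0 k ω) n _ h3
  have hadp : StronglyAdapted ℱ W := fun n => (hWm n).stronglyMeasurable
  have hsup : Supermartingale W ℱ μ := supermartingale_nat hadp hWint hstep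
  -- L¹ bound
  have hbdd : ∀ n, eLpNorm (W n) 1 μ ≤ ENNReal.ofReal (∫ ω, W 0 ω ∂μ) := by
    intro n
    have hint_le : ∫ ω, W n ω ∂μ ≤ ∫ ω, W 0 ω ∂μ := by
      have h := hsup.2.1 0 n (Nat.zero_le n)
      calc ∫ ω, W n ω ∂μ = ∫ ω, (μ[W n|ℱ 0]) ω ∂μ := (integral_condExp (ℱ.le 0)).symm
        _ ≤ ∫ ω, W 0 ω ∂μ := integral_mono_ae integrable_condExp (hWint 0) h
    have : eLpNorm (W n) 1 μ = ENNReal.ofReal (∫ ω, W n ω ∂μ) := by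
      rw [eLpNorm_one_eq_lintegral_enorm,
        ← ofReal_integral_norm_eq_lintegral_enorm (hWint n)]
      congr 1
      apply integral_congr_ae
      exact Filter.Eventually.of_forall fun ω => Real.norm_of_nonneg (hW0 n ω)
    rw [this]
    exact ENNReal.ofReal_le_ofReal hint_le
  -- convergence
  have hconv : ∀ᵐ ω ∂μ, ∃ c, Tendsto (fun n => W n ω) atTop (nhds c) := by
    have hsub : Submartingale (-W) ℱ μ := hsup.neg
    have hbdd' : ∀ n, eLpNorm ((-W) n) 1 μ ≤ ENNReal.ofReal (∫ ω, W 0 ω ∂μ) := by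
      intro n
      simpa only [Pi.neg_apply, eLpNorm_neg] using hbdd n
    filter_upwards [hsub.exists_ae_tendsto_of_bdd hbdd'] with ω hω
    obtain ⟨c, hc⟩ := hω
    refine ⟨-c, ?_⟩
    have := hc.neg
    simpa using this
  -- conclusion via pathwise lemma
  filter_upwards [hconv] with ω hω hsums
  obtain ⟨c, hc⟩ := hω
  exact rs_pathwise (fun k => z k ω) (fun k => β k ω) (fun k => ξ k ω) (fun k => ζ k ω)
    (fun k => hz0 k ω) (fun k => hβ0 k ω) (fun k => hξ0 k ω) (fun k => hζ0 k ω)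
    hsums.1 hsums.2 c hc
end
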